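/- Under the Moser map M(x,y)=(q,p) on T₁*S³∖{x₀=1}, the modified Laplace–Runge–Lenz vector satisfies [Aᵢ − (H + 1/2)qᵢ] ∘ M = xᵢy₀ − x₀yᵢ for i=1,2,3, where A = q|p|² − p⟨q,p⟩ − q/|q| and H = |p|²/2 − 1/|q|. -/

import Mathlib

open scoped RealInnerProductSpace

noncomputable section

abbrev E3 := EuclideanSpace ℝ (Fin 3)
abbrev E4 := EuclideanSpace ℝ (Fin 4)

def tl (x : E4) : E3 := WithLp.toLp 2 (fun i : Fin 3 => x i.succ)

def moserQ (x y : E4) : E3 := -((1 - x 0) • tl y) - (y 0) • tl x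

def moserP (x : E4) : E3 := (1 - x 0)⁻¹ • tl x

/-- Laplace–Runge–Lenz vector A = q|p|² − p⟨q,p⟩ − q/|q|. -/
def lrl (q p : E3) : E3 := ‖p‖ ^ 2 • q - ⟪q, p⟫ • p - ‖q‖⁻¹ • q

/-- Kepler Hamiltonian. -/
def keplerH (q p : E3) : ℝ := ‖p‖ ^ 2 / 2 - ‖q‖⁻¹

/-- [Aᵢ − (H + 1/2)qᵢ] ∘ M = xᵢy₀ − x₀yᵢ for i = 1,2,3. -/
theorem moser_lrl (x y : E4)
    (hx : ‖x‖ = 1) (hy : ‖y‖ = 1) (hxy : ⟪x, y⟫ = 0) (hx0 : x 0 ≠ 1) :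
    ∀ i : Fin 3,
      lrl (moserQ x y) (moserP x) i
        - (keplerH (moserQ x y) (moserP x) + 1 / 2) * moserQ x y i
      = x i.succ * y 0 - x 0 * y i.succ := by
  intro i
  have hxx : x 0 * x 0 + (x 1 * x 1 + (x 2 * x 2 + x (2:Fin 3).succ * x (2:Fin 3).succ)) = 1 := by
    have h := real_inner_self_eq_norm_sq x
    rw [hx, PiLp.inner_apply] at h
    simp only [RCLike.inner_apply, conj_trivial] at h
    simpa [Fin.sum_univ_succ, Fin.sum_univ_three] using h
  have hyy : y 0 * y 0 + (y 1 * y 1 + (y 2 * y 2 + y (2:Fin 3).succ * y (2:Fin 3).succ)) = 1 := by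
    have h := real_inner_self_eq_norm_sq y
    rw [hy, PiLp.inner_apply] at h
    simp only [RCLike.inner_apply, conj_trivial] at h
    simpa [Fin.sum_univ_succ, Fin.sum_univ_three] using h
  have hxy' : x 0 * y 0 + (x 1 * y 1 + (x 2 * y 2 + x (2:Fin 3).succ * y (2:Fin 3).succ)) = 0 := by
    have h := hxy
    simp [PiLp.inner_apply, RCLike.inner_apply, Fin.sum_univ_succ, Fin.sum_univ_three] at h ⊢
    linear_combination h
  have hle : x 0 ≤ 1 := by nlinarith
  have ha' : (0:ℝ) < 1 - x 0 := sub_pos.mpr (hle.lt_of_ne hx0)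
  have ha : (1:ℝ) - x 0 ≠ 0 := ne_of_gt ha'
  have hq : ∀ j : Fin 3, moserQ x y j = -((1 - x 0) * y j.succ) - y 0 * x j.succ := by
    intro j; simp [moserQ, tl]
  have hp : ∀ j : Fin 3, moserP x j = (1 - x 0)⁻¹ * x j.succ := by
    intro j; simp [moserP, tl]
  have hp2 : ‖moserP x‖ ^ 2 = (1 + x 0) / (1 - x 0) := by
    have h := (real_inner_self_eq_norm_sq (moserP x)).symm
    rw [PiLp.inner_apply] at h
    simp only [RCLike.inner_apply, conj_trivial, Fin.sum_univ_three, Fin.succ_zero_eq_one, Fin.succ_one_eq_two, hp] at h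
    rw [h]
    field_simp
    linear_combination hxx
  have hqp : ⟪moserQ x y, moserP x⟫ = -(y 0) := by
    rw [PiLp.inner_apply]
    simp only [RCLike.inner_apply, conj_trivial, Fin.sum_univ_three, Fin.succ_zero_eq_one, Fin.succ_one_eq_two, hp, hq]
    field_simp
    linear_combination (x 0 - 1) * hxy' - y 0 * hxx
  have hq2 : ‖moserQ x y‖ ^ 2 = (1 - x 0) ^ 2 := by
    have h := (real_inner_self_eq_norm_sq (moserQ x y)).symm
    rw [PiLp.inner_apply] at h
    simp only [RCLike.inner_apply, conj_trivial, Fin.sum_univ_three, Fin.succ_zero_eq_one, Fin.succ_one_eq_two, hq] at h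
    rw [h]
    linear_combination (1 - x 0)^2 * hyy + 2*(1 - x 0)*(y 0) * hxy' + (y 0)^2 * hxx
  have hqn : ‖moserQ x y‖ = 1 - x 0 := by
    rw [← Real.sqrt_sq (norm_nonneg _), hq2, Real.sqrt_sq ha'.le]
  simp only [lrl, keplerH, PiLp.sub_apply, PiLp.smul_apply, smul_eq_mul,
    hp2, hqp, hqn, hq i, hp i]
  field_simp
  ring


end
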